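/- Let G be an r-regular simple graph with n vertices and m edges, where r ≥ 2 (so that m ≥ n), and let q_1 ≤ q_2 ≤ … ≤ q_n = 2r be the eigenvalues of Q(G) listed with multiplicity. Then f(λ, G^{+0+}) = [λ² - (2+3r)λ + 4r]·(λ-2)^{m-n}·∏_{i=1}^{n-1}[(λ-2)(λ-r-q_i) - q_i]. -/

import Mathlib

open Classical

/-- The four symbols `0, 1, +, -` used in `xyz`-transformations. -/
inductive XYZ : Type
  | zero | one | plus | minus

namespace XYZ

/-- The relation on the vertices of a graph `H` given by a symbol:
`0` gives the empty graph, `1` the complete graph, `+` the graph itself,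
`-` its complement. -/
def rel {W : Type*} (H : SimpleGraph W) : XYZ → W → W → Prop
  | .zero => fun _ _ => False
  | .one  => fun u v => u ≠ v
  | .plus => fun u v => H.Adj u v
  | .minus => fun u v => u ≠ v ∧ ¬ H.Adj u v

/-- The incidence relation between a vertex and an edge given by a symbol `z`:
`+` means incident, `-` means non-incident, `0` never, `1` always. -/
def inc {W : Type*} (G : SimpleGraph W) : XYZ → W → G.edgeSet → Prop
  | .zero => fun _ _ => False
  | .one  => fun _ _ => True
  | .plus => fun v e => v ∈ (e : Sym2 W)
  | .minus => fun v e => v ∉ (e : Sym2 W)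

theorem rel_symm {W : Type*} (H : SimpleGraph W) (x : XYZ) {u v : W}
    (h : rel H x u v) : rel H x v u := by
  cases x with
  | zero => exact h.elim
  | one => exact (h : u ≠ v).symm
  | plus => exact H.symm.symm _ _ h
  | minus => exact ⟨(h.1).symm, fun h' => h.2 (H.symm.symm _ _ h')⟩

theorem rel_irrefl {W : Type*} (H : SimpleGraph W) (x : XYZ) {u : W}
    (h : rel H x u u) : False := by
  cases x with
  | zero => exact h
  | one => exact h rfl
  | plus => exact H.loopless.irrefl u h
  | minus => exact h.1 rfl

end XYZ

/-- The `xyz`-transformation `G^{xyz}` of a graph `G`: its vertex set is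
`V(G) ⊕ E(G)`; two vertices of `G` are adjacent according to the symbol `x`
(applied to `G`), two edges according to the symbol `y` (applied to the line
graph of `G`), and a vertex and an edge according to the symbol `z`
(`+` = incidence graph `B(G)`, `-` = non-incidence graph `B^c(G)`,
`0` = no vertex-edge edges, `1` = all vertex-edge edges). -/
def xyzTransform {V : Type*} (G : SimpleGraph V) (x y z : XYZ) :
    SimpleGraph (V ⊕ G.edgeSet) where
  Adj a b :=
    match a, b with
    | Sum.inl u, Sum.inl v => XYZ.rel G x u v
    | Sum.inr e, Sum.inr f => XYZ.rel G.lineGraph y e f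
    | Sum.inl v, Sum.inr e => XYZ.inc G z v e
    | Sum.inr e, Sum.inl v => XYZ.inc G z v e
  symm := by
    constructor
    rintro (u | e) (v | f) h
    · exact XYZ.rel_symm G x h
    · exact h
    · exact h
    · exact XYZ.rel_symm G.lineGraph y h
  loopless := by
    constructor
    rintro (u | e) h
    · exact XYZ.rel_irrefl G x h
    · exact XYZ.rel_irrefl G.lineGraph y h

/-- The signless Laplacian matrix `Q(G) = D(G) + A(G)` of a graph. -/
noncomputable def signlessLaplacian {V : Type*} [Fintype V] (G : SimpleGraph V) :
    Matrix V V ℝ :=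
  Matrix.of fun u v =>
    (if u = v then (G.degree u : ℝ) else 0) + (if G.Adj u v then 1 else 0)

/-- The signless Laplacian characteristic polynomial
`f(λ, G) = det (λ I - Q(G))`, evaluated at a real number `λ`. -/
noncomputable def fQ {V : Type*} [Fintype V] (G : SimpleGraph V) (lam : ℝ) : ℝ :=
  Matrix.det (lam • (1 : Matrix V V ℝ) - signlessLaplacian G)


/-!
Let `R` be the vertex–edge incidence matrix of `G`, so that `R Rᵀ = Q(G)`. Listing the vertices
of `G^{+0+}` as `V(G)` followed by `E(G)`, its signless Laplacian is the block matrix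
`[[Q(G) + r I, R], [Rᵀ, 2 I]]`. Eliminating the scalar lower right block gives
`(λ - 2)^n f(λ, G^{+0+}) = (λ - 2)^m det((λ - 2)(λ - r) I - (λ - 1) Q(G))`, and the determinant
factors over the eigenvalues `q_i` as `∏ ((λ - 2)(λ - r - q_i) - q_i)`; the factor for
`q_n = 2r` is the quadratic. As `m ≥ n`, cancelling `(λ - 2)^n` gives the formula for `λ ≠ 2`,
and continuity gives it at `λ = 2`.
-/

open Matrix SimpleGraph

theorem Matrix.pow_card_mul_det_fromBlocks_smul_one {R m n : Type*} [CommRing R]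
    [Fintype m] [Fintype n] [DecidableEq m] [DecidableEq n]
    (A : Matrix m m R) (B : Matrix m n R) (C : Matrix n m R) (c : R) :
    c ^ Fintype.card m * (fromBlocks A B C (c • 1)).det
      = c ^ Fintype.card n * (c • A - B * C).det := by
  have hprod : fromBlocks A B C (c • 1) * fromBlocks (c • 1) 0 (-C) 1
      = fromBlocks (c • A - B * C) B 0 (c • 1) := by
    simp only [fromBlocks_multiply, Matrix.mul_smul, Matrix.mul_one, Matrix.mul_zero,
      Matrix.mul_neg, Matrix.smul_mul, Matrix.one_mul, zero_add]
    congr 1 <;> simp [sub_eq_add_neg]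
  have hdet := congrArg det hprod
  simp only [det_mul, det_fromBlocks_zero₁₂, det_fromBlocks_zero₂₁, det_smul, det_one,
    mul_one] at hdet
  linear_combination hdet

theorem Matrix.det_smul_one_sub_smul_eq_prod {K V ι : Type*} [Field K] [Fintype V]
    [DecidableEq V] [Fintype ι] (hcard : Fintype.card V = Fintype.card ι) (M : Matrix V V K)
    (q : ι → K) (hM : ∀ x : K, (x • 1 - M).det = ∏ i, (x - q i)) (α β : K) :
    (α • 1 - β • M).det = ∏ i, (α - β * q i) := by
  rcases eq_or_ne β 0 with rfl | hβ
  · simp [hcard]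
  · have hscale : α • (1 : Matrix V V K) - β • M = β • ((α / β) • 1 - M) := by
      rw [smul_sub, smul_smul, mul_div_cancel₀ _ hβ]
    rw [hscale, det_smul, hM, hcard, ← Finset.card_univ, Finset.pow_card_mul_prod]
    exact Finset.prod_congr rfl fun i _ => by field_simp

theorem Fin.prod_univ_eq_prod_castLE_mul {M : Type*} [CommMonoid M] {n : ℕ} (hn : 0 < n)
    (f : Fin n → M) :
    ∏ i, f i = (∏ i : Fin (n - 1), f (Fin.castLE (Nat.sub_le n 1) i)) * f ⟨n - 1, by omega⟩ := by
  obtain ⟨k, rfl⟩ : ∃ k, n = k + 1 := ⟨n - 1, by omega⟩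
  exact Fin.prod_univ_castSucc f

theorem Sym2.card_subtype_mem_of_not_isDiag {α : Type*} [Fintype α] [DecidableEq α]
    {z : Sym2 α} (hz : ¬ z.IsDiag) : Fintype.card {a // a ∈ z} = 2 := by
  rw [Fintype.card_subtype, ← Sym2.card_toFinset_of_not_isDiag z hz]
  congr 1
  ext a
  simp

section Incidence

variable {V : Type*} (G : SimpleGraph V)

@[simp]
theorem xyzTransform_adj_inl_inl (x y z : XYZ) (u v : V) :
    (xyzTransform G x y z).Adj (.inl u) (.inl v) ↔ XYZ.rel G x u v := Iff.rfl

@[simp]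
theorem xyzTransform_adj_inr_inr (x y z : XYZ) (e f : G.edgeSet) :
    (xyzTransform G x y z).Adj (.inr e) (.inr f) ↔ XYZ.rel G.lineGraph y e f := Iff.rfl

@[simp]
theorem xyzTransform_adj_inl_inr (x y z : XYZ) (v : V) (e : G.edgeSet) :
    (xyzTransform G x y z).Adj (.inl v) (.inr e) ↔ XYZ.inc G z v e := Iff.rfl

@[simp]
theorem xyzTransform_adj_inr_inl (x y z : XYZ) (v : V) (e : G.edgeSet) :
    (xyzTransform G x y z).Adj (.inr e) (.inl v) ↔ XYZ.inc G z v e := Iff.rfl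

/-- Mathlib's `incMatrix` has a column for every element of `Sym2 V`; only the columns of actual
edges are kept here, matching the vertex set `V ⊕ G.edgeSet` of `xyzTransform`. -/
noncomputable def SimpleGraph.edgeIncMatrix : Matrix V G.edgeSet ℝ :=
  (G.incMatrix ℝ).submatrix id (↑)

theorem SimpleGraph.edgeIncMatrix_apply (v : V) (e : G.edgeSet) :
    G.edgeIncMatrix v e = if v ∈ (e : Sym2 V) then 1 else 0 := by
  simp only [edgeIncMatrix, submatrix_apply, id, incMatrix_apply', incidenceSet,
    Set.mem_ofPred_eq, e.2, true_and]

variable [Fintype V]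

theorem SimpleGraph.card_subtype_edgeSet_mem_eq_degree (v : V) :
    Fintype.card {e : G.edgeSet // v ∈ (e : Sym2 V)} = G.degree v := by
  rw [← card_incidenceSet_eq_degree]
  exact Fintype.card_congr
    { toFun := fun e => ⟨e.1.1, e.1.2, e.2⟩
      invFun := fun e => ⟨⟨e.1, e.2.1⟩, e.2.2⟩ }

theorem SimpleGraph.edgeIncMatrix_mul_transpose :
    G.edgeIncMatrix * G.edgeIncMatrixᵀ = signlessLaplacian G := by
  have hcols : G.edgeIncMatrix * G.edgeIncMatrixᵀ = G.incMatrix ℝ * (G.incMatrix ℝ)ᵀ := by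
    ext a b
    simp only [mul_apply, transpose_apply, edgeIncMatrix, submatrix_apply, id]
    rw [Finset.sum_set_coe (f := fun e => G.incMatrix ℝ a e * G.incMatrix ℝ b e)]
    refine Finset.sum_subset (Finset.subset_univ _) fun e _ he => ?_
    rw [incMatrix_of_notMem_incidenceSet G fun h => he (Set.mem_toFinset.2 h.1), zero_mul]
  rw [hcols, incMatrix_mul_transpose]
  ext a b
  by_cases hab : a = b
  · subst hab
    simp [signlessLaplacian]
  · simp [signlessLaplacian, hab]

theorem degree_xyzTransform_plus_zero_plus_inl (v : V) :
    (xyzTransform G .plus .zero .plus).degree (.inl v) = 2 * G.degree v := by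
  rw [← card_neighborSet_eq_degree, Fintype.card_congr Equiv.subtypeSum, Fintype.card_sum,
    two_mul]
  congr 1
  · exact card_neighborSet_eq_degree G v
  · convert G.card_subtype_edgeSet_mem_eq_degree v using 3
    rfl

theorem degree_xyzTransform_plus_zero_plus_inr (e : G.edgeSet) :
    (xyzTransform G .plus .zero .plus).degree (.inr e) = 2 := by
  rw [← card_neighborSet_eq_degree, Fintype.card_congr Equiv.subtypeSum, Fintype.card_sum]
  have hnone : Fintype.card
      {f : G.edgeSet // .inr f ∈ (xyzTransform G .plus .zero .plus).neighborSet (.inr e)} = 0 :=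
    Fintype.card_eq_zero_iff.mpr ⟨fun f => f.2⟩
  rw [hnone, add_zero]
  convert Sym2.card_subtype_mem_of_not_isDiag (G.not_isDiag_of_mem_edgeSet e.2) using 3
  rfl

theorem signlessLaplacian_xyzTransform_plus_zero_plus :
    signlessLaplacian (xyzTransform G .plus .zero .plus)
      = fromBlocks (signlessLaplacian G + diagonal fun v => (G.degree v : ℝ))
          G.edgeIncMatrix G.edgeIncMatrixᵀ ((2 : ℝ) • 1) := by
  ext (u | e) (v | f)
  · by_cases huv : u = v
    · subst huv
      simp only [signlessLaplacian, of_apply, ↓reduceIte, degree_xyzTransform_plus_zero_plus_inl,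
        Nat.cast_mul, Nat.cast_ofNat, SimpleGraph.irrefl, add_zero, fromBlocks_apply₁₁,
        Matrix.add_apply, diagonal_apply_eq]
      ring
    · simp [signlessLaplacian, huv, XYZ.rel]
  · simp [signlessLaplacian, edgeIncMatrix_apply, XYZ.inc]
  · simp [signlessLaplacian, edgeIncMatrix_apply, XYZ.inc]
  · by_cases hef : e = f
    · subst hef
      simp [signlessLaplacian, degree_xyzTransform_plus_zero_plus_inr]
    · simp [signlessLaplacian, hef, XYZ.rel]

end Incidence

theorem fQ_eq_det {W : Type*} [Fintype W] [DecidableEq W] (H : SimpleGraph W) (x : ℝ) :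
    fQ H x = (x • 1 - signlessLaplacian H).det := by
  unfold fQ
  congr!

theorem continuous_fQ {W : Type*} [Fintype W] (H : SimpleGraph W) : Continuous (fQ H) :=
  ((continuous_id.smul continuous_const).sub continuous_const).matrix_det

theorem SimpleGraph.IsRegularOfDegree.card_le_card_edgeSet {V : Type*} [Fintype V]
    {G : SimpleGraph V} {r : ℕ} (hreg : G.IsRegularOfDegree r) (hr : 2 ≤ r) :
    Fintype.card V ≤ Fintype.card G.edgeSet := by
  have hsum := G.sum_degrees_eq_twice_card_edges
  simp only [hreg.degree_eq, Finset.sum_const, Finset.card_univ, smul_eq_mul,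
    edgeFinset_card] at hsum
  nlinarith [Nat.mul_le_mul_left (Fintype.card V) hr]

theorem pow_card_mul_fQ_xyzTransform_plus_zero_plus {V : Type*} [Fintype V]
    {G : SimpleGraph V} {r : ℕ} (hreg : G.IsRegularOfDegree r) (x : ℝ) :
    (x - 2) ^ Fintype.card V * fQ (xyzTransform G .plus .zero .plus) x
      = (x - 2) ^ Fintype.card G.edgeSet
          * (((x - 2) * (x - r)) • 1 - (x - 1) • signlessLaplacian G).det := by
  have hblocks : x • 1 - signlessLaplacian (xyzTransform G .plus .zero .plus)
      = fromBlocks (x • 1 - signlessLaplacian G - (r : ℝ) • 1) (-G.edgeIncMatrix)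
          (-G.edgeIncMatrixᵀ) ((x - 2) • 1) := by
    rw [signlessLaplacian_xyzTransform_plus_zero_plus]
    ext (u | e) (v | f) <;>
      simp only [hreg.degree_eq, Matrix.sub_apply, Matrix.smul_apply, Matrix.add_apply,
        Matrix.neg_apply, one_apply, diagonal_apply, transpose_apply, fromBlocks_apply₁₁,
        fromBlocks_apply₁₂, fromBlocks_apply₂₁, fromBlocks_apply₂₂, Sum.inl.injEq, Sum.inr.injEq,
        reduceCtorEq, ↓reduceIte, smul_eq_mul, mul_ite, mul_one, mul_zero, zero_sub] <;>
      split_ifs <;> ring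
  rw [fQ_eq_det, hblocks, pow_card_mul_det_fromBlocks_smul_one, Matrix.neg_mul, Matrix.mul_neg,
    neg_neg, edgeIncMatrix_mul_transpose]
  congr 2
  ext u v
  simp only [Matrix.sub_apply, Matrix.smul_apply, smul_eq_mul]
  ring

theorem signless_charpoly_xyz_pz_p {V : Type*} [Fintype V] (G : SimpleGraph V) (r n m : ℕ)
    (hn : Fintype.card V = n) (hm : Fintype.card G.edgeSet = m)
    (hreg : G.IsRegularOfDegree r) (hr2 : 2 ≤ r) (hn0 : 0 < n)
    (q : Fin n → ℝ)
    (hlast : q ⟨n - 1, by omega⟩ = 2 * r)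
    (hq : ∀ x : ℝ, fQ G x = ∏ i : Fin n, (x - q i)) :
    ∀ lam : ℝ,
      fQ (xyzTransform G XYZ.plus XYZ.zero XYZ.plus) lam =
        (lam ^ 2 - (2 + 3 * r) * lam + 4 * r) * (lam - 2) ^ (m - n) *
          ∏ i : Fin (n - 1), ((lam - 2) * (lam - r - (q (Fin.castLE (Nat.sub_le n 1) i))) - (q (Fin.castLE (Nat.sub_le n 1) i))) := by
  obtain ⟨k, rfl⟩ : ∃ k, m = n + k :=
    Nat.exists_eq_add_of_le (hn ▸ hm ▸ hreg.card_le_card_edgeSet hr2)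
  have hQ (x : ℝ) : (x • 1 - signlessLaplacian G).det = ∏ i, (x - q i) :=
    (fQ_eq_det G x).symm.trans (hq x)
  refine funext_iff.mp (Continuous.ext_on (dense_compl_singleton 2)
    (continuous_fQ (xyzTransform G .plus .zero .plus)) ?_ fun x hx => ?_)
  · fun_prop
  rw [Set.mem_compl_singleton_iff] at hx
  have hfactor (t : ℝ) : (x - 2) * (x - r) - (x - 1) * t = (x - 2) * (x - r - t) - t := by ring
  have hscaled := pow_card_mul_fQ_xyzTransform_plus_zero_plus hreg x
  rw [hn, hm, det_smul_one_sub_smul_eq_prod (by simp [hn]) _ q hQ,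
    Fin.prod_univ_eq_prod_castLE_mul hn0, hlast] at hscaled
  simp_rw [hfactor] at hscaled
  apply mul_left_cancel₀ (pow_ne_zero n (sub_ne_zero.2 hx))
  rw [hscaled, Nat.add_sub_cancel_left, pow_add]
  ring
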